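/- arXiv:2409.02234 — 6 statements merged into one kernel-verified Lean document; each statement's English description precedes it below -/
import Mathlib

section
/- Let A_1, A_2, A_3, A_4 be 2×2 complex matrices, each of determinant 1, with A_1A_2A_3A_4 = I. Set x = tr(A_1A_2), y = tr(A_2A_3), z = tr(A_1A_3), and a_i = tr(A_i) for i = 1,…,4. Then x² + y² + z² + xyz = Ax + By + Cz + D, where A = a_1a_2 + a_3a_4, B = a_2a_3 + a_1a_4, C = a_1a_3 + a_2a_4, and D = 4 − a_1² − a_2² − a_3² − a_4² − a_1a_2a_3a_4. -/
/-- The Fricke trace identity: if `A₁, A₂, A₃, A₄` are `2×2` complex matrices of determinant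
one with `A₁A₂A₃A₄ = I`, then, with `x = tr(A₁A₂)`, `y = tr(A₂A₃)`, `z = tr(A₁A₃)` and
`a_i = tr(A_i)`, one has `x² + y² + z² + xyz = Ax + By + Cz + D` for
`A = a₁a₂ + a₃a₄`, `B = a₂a₃ + a₁a₄`, `C = a₁a₃ + a₂a₄`,
`D = 4 − a₁² − a₂² − a₃² − a₄² − a₁a₂a₃a₄`. -/
theorem fricke_trace_identity (A₁ A₂ A₃ A₄ : Matrix (Fin 2) (Fin 2) ℂ)
    (h1 : A₁.det = 1) (h2 : A₂.det = 1) (h3 : A₃.det = 1) (h4 : A₄.det = 1)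
    (hprod : A₁ * A₂ * A₃ * A₄ = 1) :
    (A₁ * A₂).trace ^ 2 + (A₂ * A₃).trace ^ 2 + (A₁ * A₃).trace ^ 2 +
        (A₁ * A₂).trace * (A₂ * A₃).trace * (A₁ * A₃).trace =
      (A₁.trace * A₂.trace + A₃.trace * A₄.trace) * (A₁ * A₂).trace +
        (A₂.trace * A₃.trace + A₁.trace * A₄.trace) * (A₂ * A₃).trace +
        (A₁.trace * A₃.trace + A₂.trace * A₄.trace) * (A₁ * A₃).trace +
        (4 - A₁.trace ^ 2 - A₂.trace ^ 2 - A₃.trace ^ 2 - A₄.trace ^ 2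
          - A₁.trace * A₂.trace * A₃.trace * A₄.trace) := by
  have hdet : (A₁ * A₂ * A₃).det = 1 := by
    simp [Matrix.det_mul, h1, h2, h3]
  have hadj : (A₁ * A₂ * A₃) * (A₁ * A₂ * A₃).adjugate = 1 := by
    rw [Matrix.mul_adjugate, hdet, one_smul]
  have hA4 : A₄ = (A₁ * A₂ * A₃).adjugate := by
    rw [← Matrix.inv_eq_right_inv hprod, Matrix.inv_eq_right_inv hadj]
  have htr : A₄.trace = (A₁ * A₂ * A₃).trace := by
    rw [hA4]
    rw [show (A₁ * A₂ * A₃) = !![(A₁*A₂*A₃) 0 0, (A₁*A₂*A₃) 0 1; (A₁*A₂*A₃) 1 0, (A₁*A₂*A₃) 1 1] from (Matrix.etaExpand_eq _).symm]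
    rw [Matrix.adjugate_fin_two]
    simp [Matrix.trace_fin_two]
    ring
  rw [htr]
  rw [Matrix.det_fin_two] at h1 h2 h3
  simp only [Matrix.trace_fin_two, Matrix.mul_apply, Fin.sum_univ_two]
  linear_combination (2 + -1*A₃ 1 1^2 + -1*A₃ 0 0^2 + -1*A₂ 1 1^2 + A₂ 1 1^2*A₃ 0 0*A₃ 1 1 + -1*A₂ 1 0*A₂ 1 1*A₃ 0 1*A₃ 1 1 + A₂ 1 0*A₂ 1 1*A₃ 0 0*A₃ 0 1 + -1*A₂ 1 0^2*A₃ 0 1^2 + -1*A₂ 0 1*A₂ 1 1*A₃ 1 0*A₃ 1 1 + A₂ 0 1*A₂ 1 1*A₃ 0 0*A₃ 1 0 + -1*A₂ 0 1^2*A₃ 1 0^2 + A₂ 0 0*A₂ 1 1*A₃ 1 1^2 + -2*A₂ 0 0*A₂ 1 1*A₃ 0 0*A₃ 1 1 + A₂ 0 0*A₂ 1 1*A₃ 0 0^2 + A₂ 0 0*A₂ 1 0*A₃ 0 1*A₃ 1 1 + -1*A₂ 0 0*A₂ 1 0*A₃ 0 0*A₃ 0 1 + A₂ 0 0*A₂ 0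 1*A₃ 1 0*A₃ 1 1 + -1*A₂ 0 0*A₂ 0 1*A₃ 0 0*A₃ 1 0 + -1*A₂ 0 0^2 + A₂ 0 0^2*A₃ 0 0*A₃ 1 1) * h1 + (2 + -2*A₃ 0 0*A₃ 1 1 + -1*A₁ 1 1^2 + A₁ 1 1^2*A₃ 0 0*A₃ 1 1 + -1*A₁ 1 0*A₁ 1 1*A₃ 0 1*A₃ 1 1 + A₁ 1 0*A₁ 1 1*A₃ 0 0*A₃ 0 1 + -1*A₁ 1 0^2*A₃ 0 1^2 + -1*A₁ 0 1*A₁ 1 1*A₃ 1 0*A₃ 1 1 + A₁ 0 1*A₁ 1 1*A₃ 0 0*A₃ 1 0 + A₁ 0 1*A₁ 1 0*A₃ 1 1^2 + -2*A₁ 0 1*A₁ 1 0*A₃ 0 0*A₃ 1 1 + A₁ 0 1*A₁ 1 0*A₃ 0 0^2 + -1*A₁ 0 1^2*A₃ 1 0^2 + A₁ 0 0*A₁ 1 0*A₃ 0 1*A₃ 1 1 + -1*A₁ 0 0*A₁ 1 0*A₃ 0 0*A₃ 0 1 + A₁ 0 0*A₁ 0 1*A₃ 1 0*A₃ 1 1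 + -1*A₁ 0 0*A₁ 0 1*A₃ 0 0*A₃ 1 0 + -1*A₁ 0 0^2 + A₁ 0 0^2*A₃ 0 0*A₃ 1 1) * h2 + (-2*A₂ 0 1*A₂ 1 0 + A₁ 1 1^2*A₂ 0 1*A₂ 1 0 + -1*A₁ 1 0*A₁ 1 1*A₂ 0 1*A₂ 1 1 + A₁ 1 0*A₁ 1 1*A₂ 0 0*A₂ 0 1 + -1*A₁ 1 0^2*A₂ 0 1^2 + -1*A₁ 0 1*A₁ 1 1*A₂ 1 0*A₂ 1 1 + A₁ 0 1*A₁ 1 1*A₂ 0 0*A₂ 1 0 + -2*A₁ 0 1*A₁ 1 0 + A₁ 0 1*A₁ 1 0*A₂ 1 1^2 + -2*A₁ 0 1*A₁ 1 0*A₂ 0 1*A₂ 1 0 + A₁ 0 1*A₁ 1 0*A₂ 0 0^2 + -1*A₁ 0 1^2*A₂ 1 0^2 + A₁ 0 0*A₁ 1 0*A₂ 0 1*A₂ 1 1 + -1*A₁ 0 0*A₁ 1 0*A₂ 0 0*A₂ 0 1 + A₁ 0 0*A₁ 0 1*A₂ 1 0*A₂ 1 1 + -1*A₁ 0 0*A₁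 0 1*A₂ 0 0*A₂ 1 0 + A₁ 0 0^2*A₂ 0 1*A₂ 1 0) * h3
end

section
/- Every triple (x,y,z) of positive integers satisfying the Markoff equation x² + y² + z² = 3xyz can be transformed into the triple (1,1,1) by finitely many applications of the Vieta moves T_1, T_2, T_3. Equivalently, the positive integer solutions of the Markoff equation form a single orbit under the group generated by T_1, T_2, T_3. -/
/-- The first Vieta move on `ℤ³`: `(x,y,z) ↦ (3yz − x, y, z)`. -/
def markoffT1 (p : ℤ × ℤ × ℤ) : ℤ × ℤ × ℤ := (3 * p.2.1 * p.2.2 - p.1, p.2.1, p.2.2)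

/-- The second Vieta move on `ℤ³`: `(x,y,z) ↦ (x, 3xz − y, z)`. -/
def markoffT2 (p : ℤ × ℤ × ℤ) : ℤ × ℤ × ℤ := (p.1, 3 * p.1 * p.2.2 - p.2.1, p.2.2)

/-- The third Vieta move on `ℤ³`: `(x,y,z) ↦ (x, y, 3xy − z)`. -/
def markoffT3 (p : ℤ × ℤ × ℤ) : ℤ × ℤ × ℤ := (p.1, p.2.1, 3 * p.1 * p.2.1 - p.2.2)

/-- The three Vieta moves, indexed by `Fin 3`. -/
def markoffMove : Fin 3 → (ℤ × ℤ × ℤ) → (ℤ × ℤ × ℤ) := ![markoffT1, markoffT2, markoffT3]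

lemma markoff_key_aux (x y z : ℤ) (hx : 0 < x) (hy : 0 < y) (hz : 0 < z)
    (hm : x^2 + y^2 + z^2 = 3*x*y*z) (h1 : y ≤ x) (h2 : z ≤ y)
    (hne : ¬(x = 1 ∧ y = 1 ∧ z = 1)) :
    0 < 3*y*z - x ∧ 3*y*z - x < x := by
  have hx2 : 2 ≤ x := by
    rcases lt_or_ge x 2 with h | h
    · exfalso
      have hx1 : x = 1 := le_antisymm (by omega) hx
      have hy1 : y = 1 := le_antisymm (by omega) hy
      have hz1 : z = 1 := le_antisymm (by omega) hz
      exact hne ⟨hx1, hy1, hz1⟩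
    · exact h
  constructor
  · nlinarith [mul_pos hy hz, sq_nonneg y, sq_nonneg z]
  · by_contra hc
    push_neg at hc
    have A : 3*y^2*z ≤ 2*y^2 + z^2 := by
      nlinarith [mul_nonneg (sub_nonneg.2 h1) (show (0:ℤ) ≤ 3*y*z - x - y by linarith)]
    have hz1 : z = 1 := by
      nlinarith [mul_pos hy hy, mul_nonneg (sub_nonneg.2 h2) (by linarith : (0:ℤ) ≤ y + z)]
    have hy1 : y = 1 := by nlinarith
    subst hz1; subst hy1; linarith

lemma markoff_key (x y z : ℤ) (hx : 0 < x) (hy : 0 < y) (hz : 0 < z)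
    (hm : x^2 + y^2 + z^2 = 3*x*y*z) (h1 : y ≤ x) (h2 : z ≤ x)
    (hne : ¬(x = 1 ∧ y = 1 ∧ z = 1)) :
    0 < 3*y*z - x ∧ 3*y*z - x < x := by
  rcases le_total z y with h | h
  · exact markoff_key_aux x y z hx hy hz hm h1 h hne
  · have := markoff_key_aux x z y hx hz hy (by linarith [hm]; ) h2 h
      (by rintro ⟨a, b, c⟩; exact hne ⟨a, c, b⟩)
    constructor <;> [nlinarith [this.1]; nlinarith [this.2]]

lemma markoff_descent : ∀ n : ℕ, ∀ p : ℤ × ℤ × ℤ, 0 < p.1 → 0 < p.2.1 → 0 < p.2.2 →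
    p.1 ^ 2 + p.2.1 ^ 2 + p.2.2 ^ 2 = 3 * p.1 * p.2.1 * p.2.2 →
    p.1 + p.2.1 + p.2.2 ≤ (n : ℤ) →
    ∃ l : List (Fin 3), l.foldl (fun q i => markoffMove i q) p = (1, 1, 1) := by
  intro n
  induction n with
  | zero => intro p hx hy hz hm hs; exfalso; simp at hs; linarith
  | succ n ih =>
    rintro ⟨x, y, z⟩ hx hy hz hm hs
    simp only at hx hy hz hm hs
    by_cases h111 : x = 1 ∧ y = 1 ∧ z = 1
    · exact ⟨[], by simp [h111.1, h111.2.1, h111.2.2]⟩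
    rcases le_total y x with hyx | hxy
    · rcases le_total z x with hzx | hxz
      · -- x is max, use T1
        obtain ⟨hp, hl⟩ := markoff_key x y z hx hy hz hm hyx hzx h111
        obtain ⟨l, hl'⟩ := ih (3*y*z - x, y, z) hp hy hz (by simp only; linear_combination hm)
          (by simp only; push_cast at hs ⊢; linarith)
        exact ⟨0 :: l, by simpa [markoffMove, markoffT1] using hl'⟩
      · -- z is max, use T3
        obtain ⟨hp, hl⟩ := markoff_key z x y hz hx hy (by linarith [hm]; ) hxz (by linarith)
          (by rintro ⟨a, b, c⟩; exact h111 ⟨b, c, a⟩)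
        obtain ⟨l, hl'⟩ := ih (x, y, 3*x*y - z) hx hy (by simpa using hp)
          (by simp only; linear_combination hm)
          (by simp only; push_cast at hs ⊢; linarith)
        exact ⟨2 :: l, by simpa [markoffMove, markoffT3] using hl'⟩
    · rcases le_total z y with hzy | hyz
      · -- y is max, use T2
        obtain ⟨hp, hl⟩ := markoff_key y x z hy hx hz (by linarith [hm]; ) hxy hzy
          (by rintro ⟨a, b, c⟩; exact h111 ⟨b, a, c⟩)
        obtain ⟨l, hl'⟩ := ih (x, 3*x*z - y, z) hx (by simpa using hp) hz
          (by simp only; linear_combination hm)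
          (by simp only; push_cast at hs ⊢; linarith)
        exact ⟨1 :: l, by simpa [markoffMove, markoffT2] using hl'⟩
      · -- z is max, use T3
        obtain ⟨hp, hl⟩ := markoff_key z x y hz hx hy (by linarith [hm]; ) (by linarith) hyz
          (by rintro ⟨a, b, c⟩; exact h111 ⟨b, c, a⟩)
        obtain ⟨l, hl'⟩ := ih (x, y, 3*x*y - z) hx hy (by simpa using hp)
          (by simp only; linear_combination hm)
          (by simp only; push_cast at hs ⊢; linarith)
        exact ⟨2 :: l, by simpa [markoffMove, markoffT3] using hl'⟩

/-- Markoff's theorem: every triple of positive integers solving the Markoff equation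
`x² + y² + z² = 3xyz` can be carried to `(1,1,1)` by finitely many Vieta moves; hence the
positive solutions form a single orbit under the group generated by `T₁, T₂, T₃`. -/
theorem markoff_single_orbit (p : ℤ × ℤ × ℤ) (hx : 0 < p.1) (hy : 0 < p.2.1)
    (hz : 0 < p.2.2) (h : p.1 ^ 2 + p.2.1 ^ 2 + p.2.2 ^ 2 = 3 * p.1 * p.2.1 * p.2.2) :
    ∃ l : List (Fin 3), l.foldl (fun q i => markoffMove i q) p = (1, 1, 1) := by
  exact markoff_descent (p.1 + p.2.1 + p.2.2).toNat p hx hy hz h (Int.self_le_toNat _)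
end

section
/- Let A_1, A_2, A_3 and B_1, B_2, B_3 be elements of GL_2(ℂ) with A_1A_2A_3 = I = B_1B_2B_3. Suppose that for each i the matrix B_i is conjugate to A_i in GL_2(ℂ), that the triple (A_1,A_2,A_3) is irreducible (the only ℂ-subspaces of ℂ² invariant under all of A_1, A_2, A_3 are 0 and ℂ²), and that the triple (B_1,B_2,B_3) is irreducible. Then there exists a single P ∈ GL_2(ℂ) with B_i = P A_i P^{−1} for i = 1, 2, 3. -/
/-!
Pick an eigenvector `v` of `A₁`, say `A₁ v = μ v`; if `B₁ = Q A₁ Q⁻¹` then `Q v` is a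
`μ`-eigenvector of `B₁`. Irreducibility forces `v, A₂ v` to be a basis: otherwise the line
through `v` is invariant under `A₁`, `A₂` and hence `A₃ = (A₁ A₂)⁻¹`. In this basis `A₂` is the
companion matrix of its characteristic polynomial and `A₁` is upper triangular, with entries
determined by `μ`, `tr A₁`, `tr A₂`, `det A₂` and `tr (A₁ A₂) = tr A₃⁻¹`. These are shared by
the `B`-triple, so both triples have the same matrices in their respective bases.
-/

open Matrix

section Conjugation

variable {n R : Type*} [Fintype n] [DecidableEq n] [CommRing R]

theorem inv_conj {P : Matrix n n R} (hP : IsUnit P) (M : Matrix n n R) :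
    (P * M * P⁻¹)⁻¹ = P * M⁻¹ * P⁻¹ := by
  rw [Matrix.mul_inv_rev, Matrix.mul_inv_rev,
    nonsing_inv_nonsing_inv P ((isUnit_iff_isUnit_det P).1 hP), Matrix.mul_assoc]

theorem inv_mul_mul_mulVec_of_mulVec {S X : Matrix n n R} (hS : IsUnit S) {x y : n → R}
    (h : X *ᵥ (S *ᵥ x) = S *ᵥ y) : (S⁻¹ * X * S) *ᵥ x = y := by
  rw [← mulVec_mulVec, ← mulVec_mulVec, h, mulVec_mulVec,
    nonsing_inv_mul S ((isUnit_iff_isUnit_det S).1 hS), one_mulVec]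

theorem conj_mulVec_mulVec_eq_smul {P X : Matrix n n R} (hP : IsUnit P) {v : n → R} {μ : R}
    (h : X *ᵥ v = μ • v) : (P * X * P⁻¹) *ᵥ (P *ᵥ v) = μ • (P *ᵥ v) := by
  rw [mulVec_mulVec, Matrix.mul_assoc, nonsing_inv_mul P ((isUnit_iff_isUnit_det P).1 hP),
    Matrix.mul_one, ← mulVec_mulVec, h, mulVec_smul]

theorem eq_conj_of_inv_conj_eq {S T X Y : Matrix n n R} (hS : IsUnit S) (hT : IsUnit T)
    (h : S⁻¹ * X * S = T⁻¹ * Y * T) : Y = (T * S⁻¹) * X * (T * S⁻¹)⁻¹ := by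
  have hTd := (isUnit_iff_isUnit_det T).1 hT
  rw [Matrix.mul_inv_rev, nonsing_inv_nonsing_inv S ((isUnit_iff_isUnit_det S).1 hS)]
  calc Y = (T * T⁻¹) * Y * (T * T⁻¹) := by rw [mul_nonsing_inv T hTd]; noncomm_ring
    _ = T * (T⁻¹ * Y * T) * T⁻¹ := by noncomm_ring
    _ = T * S⁻¹ * X * (S * T⁻¹) := by rw [← h]; noncomm_ring

theorem trace_mul_eq_of_conj_third {X₁ X₂ X₃ Y₁ Y₂ Y₃ Q : Matrix n n R}
    (hX : X₁ * X₂ * X₃ = 1) (hY : Y₁ * Y₂ * Y₃ = 1) (hQ : IsUnit Q)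
    (h₃ : Y₃ = Q * X₃ * Q⁻¹) : (Y₁ * Y₂).trace = (X₁ * X₂).trace := by
  rw [← inv_eq_left_inv hY, ← inv_eq_left_inv hX, h₃, inv_conj hQ, trace_conj hQ]

theorem eq_conj_of_mul_mul_eq_one {X₁ X₂ X₃ Y₁ Y₂ Y₃ P : Matrix n n R}
    (hX : X₁ * X₂ * X₃ = 1) (hY : Y₁ * Y₂ * Y₃ = 1) (hP : IsUnit P)
    (h₁ : Y₁ = P * X₁ * P⁻¹) (h₂ : Y₂ = P * X₂ * P⁻¹) : Y₃ = P * X₃ * P⁻¹ := by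
  have h₁₂ : Y₁ * Y₂ = P * (X₁ * X₂) * P⁻¹ := by
    rw [h₁, h₂]
    calc P * X₁ * P⁻¹ * (P * X₂ * P⁻¹) = P * X₁ * (P⁻¹ * P) * X₂ * P⁻¹ := by noncomm_ring
      _ = P * (X₁ * X₂) * P⁻¹ := by
        rw [nonsing_inv_mul P ((isUnit_iff_isUnit_det P).1 hP)]; noncomm_ring
  rw [← inv_eq_right_inv hY, ← inv_eq_right_inv hX, h₁₂, inv_conj hP]

theorem smul_mulVec_eq_of_mul_mul_eq_one {X₁ X₂ X₃ : Matrix n n R} (hX : X₁ * X₂ * X₃ = 1)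
    {v : n → R} {a b : R} (h₁ : X₁ *ᵥ v = a • v) (h₂ : X₂ *ᵥ v = b • v) :
    (a * b) • (X₃ *ᵥ v) = v := by
  have h : X₃ * (X₁ * X₂) = 1 := mul_eq_one_comm.1 hX
  calc (a * b) • (X₃ *ᵥ v) = X₃ *ᵥ ((X₁ * X₂) *ᵥ v) := by
        rw [← mulVec_mulVec, h₂, mulVec_smul, h₁, smul_smul, mulVec_smul, mul_comm]
    _ = v := by rw [mulVec_mulVec, h, one_mulVec]

end Conjugation

theorem mulVec_mem_span_singleton_of_eq_smul {n R : Type*} [Fintype n] [CommRing R]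
    {X : Matrix n n R} {v : n → R} {a : R} (h : X *ᵥ v = a • v) :
    ∀ u ∈ R ∙ v, X *ᵥ u ∈ R ∙ v := by
  intro u hu
  obtain ⟨b, rfl⟩ := Submodule.mem_span_singleton.1 hu
  rw [mulVec_smul, h, smul_smul]
  exact Submodule.smul_mem _ _ (Submodule.mem_span_singleton_self v)

theorem exists_mulVec_eq_smul {n K : Type*} [Fintype n] [DecidableEq n] [Nonempty n] [Field K]
    [IsAlgClosed K] (X : Matrix n n K) : ∃ μ : K, ∃ v ≠ 0, X *ᵥ v = μ • v := by
  obtain ⟨μ, hμ⟩ := Module.End.exists_eigenvalue (toLin' X)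
  obtain ⟨v, hv⟩ := hμ.exists_hasEigenvector
  exact ⟨μ, v, hv.2, by simpa using hv.apply_eq_smul⟩

section TwoByTwo

variable {K : Type*} [Field K]

def cyclicBasis (Y : Matrix (Fin 2) (Fin 2) K) (v : Fin 2 → K) : Matrix (Fin 2) (Fin 2) K :=
  of fun i j => ![v, Y *ᵥ v] j i

theorem cyclicBasis_mulVec_single_zero (Y : Matrix (Fin 2) (Fin 2) K) (v : Fin 2 → K) :
    cyclicBasis Y v *ᵥ Pi.single 0 1 = v := by
  ext i; simp [cyclicBasis]

theorem cyclicBasis_mulVec_single_one (Y : Matrix (Fin 2) (Fin 2) K) (v : Fin 2 → K) :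
    cyclicBasis Y v *ᵥ Pi.single 1 1 = Y *ᵥ v := by
  ext i; simp [cyclicBasis]

theorem isUnit_cyclicBasis {Y : Matrix (Fin 2) (Fin 2) K} {v : Fin 2 → K}
    (h : LinearIndependent K ![v, Y *ᵥ v]) : IsUnit (cyclicBasis Y v) :=
  linearIndependent_cols_iff_isUnit.1 (by convert h; ext j i; fin_cases j <;> rfl)

theorem eq_companion_of_mulVec_single_zero {C : Matrix (Fin 2) (Fin 2) K}
    (h : C *ᵥ Pi.single 0 1 = Pi.single 1 1) : C = !![0, -C.det; 1, C.trace] := by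
  have h₀ : C 0 0 = 0 := by simpa using congrFun h 0
  have h₁ : C 1 0 = 1 := by simpa using congrFun h 1
  rw [det_fin_two, trace_fin_two]
  ext i j; fin_cases i <;> fin_cases j <;> simp [h₀, h₁]

theorem eq_triangular_of_mulVec_single_zero {C₁ C₂ : Matrix (Fin 2) (Fin 2) K} {μ : K}
    (h₁ : C₁ *ᵥ Pi.single 0 1 = μ • Pi.single 0 1) (h₂ : C₂ *ᵥ Pi.single 0 1 = Pi.single 1 1) :
    C₁ = !![μ, (C₁ * C₂).trace - C₂.trace * (C₁.trace - μ); 0, C₁.trace - μ] := by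
  have h₁₀ : C₁ 0 0 = μ := by simpa using congrFun h₁ 0
  have h₁₁ : C₁ 1 0 = 0 := by simpa using congrFun h₁ 1
  have h₂₀ : C₂ 0 0 = 0 := by simpa using congrFun h₂ 0
  have h₂₁ : C₂ 1 0 = 1 := by simpa using congrFun h₂ 1
  simp only [trace_fin_two, mul_apply, Fin.sum_univ_two]
  ext i j; fin_cases i <;> fin_cases j <;> simp [h₁₀, h₁₁, h₂₀, h₂₁]; ring

theorem cyclicBasis_conj {X₁ X₂ : Matrix (Fin 2) (Fin 2) K} {v : Fin 2 → K} {μ : K}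
    (hv : X₁ *ᵥ v = μ • v) (hind : LinearIndependent K ![v, X₂ *ᵥ v]) :
    (cyclicBasis X₂ v)⁻¹ * X₁ * cyclicBasis X₂ v =
        !![μ, (X₁ * X₂).trace - X₂.trace * (X₁.trace - μ); 0, X₁.trace - μ] ∧
      (cyclicBasis X₂ v)⁻¹ * X₂ * cyclicBasis X₂ v = !![0, -X₂.det; 1, X₂.trace] := by
  set S := cyclicBasis X₂ v
  have hS : IsUnit S := isUnit_cyclicBasis hind
  have h₁ : (S⁻¹ * X₁ * S) *ᵥ Pi.single 0 1 = μ • Pi.single 0 1 :=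
    inv_mul_mul_mulVec_of_mulVec hS (by
      rw [cyclicBasis_mulVec_single_zero, hv, mulVec_smul, cyclicBasis_mulVec_single_zero])
  have h₂ : (S⁻¹ * X₂ * S) *ᵥ Pi.single 0 1 = Pi.single 1 1 :=
    inv_mul_mul_mulVec_of_mulVec hS (by
      rw [cyclicBasis_mulVec_single_zero, cyclicBasis_mulVec_single_one])
  have h₁₂ : (S⁻¹ * X₁ * S) * (S⁻¹ * X₂ * S) = S⁻¹ * (X₁ * X₂) * S := by
    calc (S⁻¹ * X₁ * S) * (S⁻¹ * X₂ * S) = S⁻¹ * X₁ * (S * S⁻¹) * X₂ * S := by noncomm_ring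
      _ = S⁻¹ * (X₁ * X₂) * S := by
        rw [mul_nonsing_inv S ((isUnit_iff_isUnit_det S).1 hS)]; noncomm_ring
  constructor
  · rw [eq_triangular_of_mulVec_single_zero h₁ h₂, h₁₂, trace_conj' hS, trace_conj' hS,
      trace_conj' hS]
  · rw [eq_companion_of_mulVec_single_zero h₂, det_conj' hS, trace_conj' hS]

theorem exists_conj_of_invariants_eq {X₁ X₂ Y₁ Y₂ : Matrix (Fin 2) (Fin 2) K}
    {v w : Fin 2 → K} {μ : K} (hv : X₁ *ᵥ v = μ • v) (hw : Y₁ *ᵥ w = μ • w)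
    (hvind : LinearIndependent K ![v, X₂ *ᵥ v]) (hwind : LinearIndependent K ![w, Y₂ *ᵥ w])
    (htr₁ : Y₁.trace = X₁.trace) (htr₂ : Y₂.trace = X₂.trace) (hdet₂ : Y₂.det = X₂.det)
    (htr₁₂ : (Y₁ * Y₂).trace = (X₁ * X₂).trace) :
    ∃ P : Matrix (Fin 2) (Fin 2) K, IsUnit P ∧ Y₁ = P * X₁ * P⁻¹ ∧ Y₂ = P * X₂ * P⁻¹ := by
  have hS := isUnit_cyclicBasis hvind
  have hT := isUnit_cyclicBasis hwind
  obtain ⟨hX₁, hX₂⟩ := cyclicBasis_conj hv hvind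
  obtain ⟨hY₁, hY₂⟩ := cyclicBasis_conj hw hwind
  refine ⟨cyclicBasis Y₂ w * (cyclicBasis X₂ v)⁻¹, hT.mul (isUnit_nonsing_inv_iff.2 hS),
    eq_conj_of_inv_conj_eq hS hT ?_, eq_conj_of_inv_conj_eq hS hT ?_⟩
  · rw [hX₁, hY₁, htr₁, htr₂, htr₁₂]
  · rw [hX₂, hY₂, htr₂, hdet₂]

theorem linearIndependent_mulVec_of_irreducible {X₁ X₂ X₃ : Matrix (Fin 2) (Fin 2) K}
    (hX : X₁ * X₂ * X₃ = 1)
    (hirr : ∀ W : Submodule K (Fin 2 → K),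
      (∀ v ∈ W, X₁ *ᵥ v ∈ W) → (∀ v ∈ W, X₂ *ᵥ v ∈ W) → (∀ v ∈ W, X₃ *ᵥ v ∈ W) →
        W = ⊥ ∨ W = ⊤)
    {v : Fin 2 → K} {μ : K} (hv0 : v ≠ 0) (hv : X₁ *ᵥ v = μ • v) :
    LinearIndependent K ![v, X₂ *ᵥ v] := by
  rw [LinearIndependent.pair_iff' hv0]
  intro c hc
  have h₃ : (μ * c) • (X₃ *ᵥ v) = v := smul_mulVec_eq_of_mul_mul_eq_one hX hv hc.symm
  have hμc : μ * c ≠ 0 := by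
    intro h
    rw [h, zero_smul] at h₃
    exact hv0 h₃.symm
  have h₃' : X₃ *ᵥ v = (μ * c)⁻¹ • v := (eq_inv_smul_iff₀ hμc).2 h₃
  rcases hirr (K ∙ v) (mulVec_mem_span_singleton_of_eq_smul hv)
      (mulVec_mem_span_singleton_of_eq_smul hc.symm) (mulVec_mem_span_singleton_of_eq_smul h₃')
    with h | h
  · exact hv0 (Submodule.span_singleton_eq_bot.1 h)
  · have h₁ := finrank_span_singleton (K := K) hv0
    rw [h, finrank_top, Module.finrank_fin_fun] at h₁
    omega

end TwoByTwo

theorem rank_two_hypergeometric_rigidity_general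
    (A₁ A₂ A₃ B₁ B₂ B₃ : Matrix (Fin 2) (Fin 2) ℂ)
    (hprodA : A₁ * A₂ * A₃ = 1) (hprodB : B₁ * B₂ * B₃ = 1)
    (hconj1 : ∃ Q : Matrix (Fin 2) (Fin 2) ℂ, IsUnit Q ∧ B₁ = Q * A₁ * Q⁻¹)
    (hconj2 : ∃ Q : Matrix (Fin 2) (Fin 2) ℂ, IsUnit Q ∧ B₂ = Q * A₂ * Q⁻¹)
    (hconj3 : ∃ Q : Matrix (Fin 2) (Fin 2) ℂ, IsUnit Q ∧ B₃ = Q * A₃ * Q⁻¹)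
    (hirrA : ∀ W : Submodule ℂ (Fin 2 → ℂ),
      (∀ v ∈ W, A₁.mulVec v ∈ W) → (∀ v ∈ W, A₂.mulVec v ∈ W) →
      (∀ v ∈ W, A₃.mulVec v ∈ W) → W = ⊥ ∨ W = ⊤)
    (hirrB : ∀ W : Submodule ℂ (Fin 2 → ℂ),
      (∀ v ∈ W, B₁.mulVec v ∈ W) → (∀ v ∈ W, B₂.mulVec v ∈ W) →
      (∀ v ∈ W, B₃.mulVec v ∈ W) → W = ⊥ ∨ W = ⊤) :
    ∃ P : Matrix (Fin 2) (Fin 2) ℂ, IsUnit P ∧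
      B₁ = P * A₁ * P⁻¹ ∧ B₂ = P * A₂ * P⁻¹ ∧ B₃ = P * A₃ * P⁻¹ := by
  obtain ⟨Q₁, hQ₁, h₁⟩ := hconj1
  obtain ⟨Q₂, hQ₂, h₂⟩ := hconj2
  obtain ⟨Q₃, hQ₃, h₃⟩ := hconj3
  obtain ⟨μ, v, hv0, hv⟩ := exists_mulVec_eq_smul A₁
  have hw : B₁ *ᵥ (Q₁ *ᵥ v) = μ • (Q₁ *ᵥ v) := h₁ ▸ conj_mulVec_mulVec_eq_smul hQ₁ hv
  have hw0 : Q₁ *ᵥ v ≠ 0 := fun h ↦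
    hv0 (mulVec_injective_iff_isUnit.2 hQ₁ (by rw [h, mulVec_zero]))
  obtain ⟨P, hP, e₁, e₂⟩ := exists_conj_of_invariants_eq hv hw
    (linearIndependent_mulVec_of_irreducible hprodA hirrA hv0 hv)
    (linearIndependent_mulVec_of_irreducible hprodB hirrB hw0 hw)
    (by rw [h₁, trace_conj hQ₁]) (by rw [h₂, trace_conj hQ₂]) (by rw [h₂, det_conj hQ₂])
    (trace_mul_eq_of_conj_third hprodA hprodB hQ₃ h₃)
  exact ⟨P, hP, e₁, e₂, eq_conj_of_mul_mul_eq_one hprodA hprodB hP e₁ e₂⟩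

/-- Rigidity of irreducible triples of `2×2` matrices with product the identity: if
`A₁A₂A₃ = I = B₁B₂B₃`, each `B_i` is conjugate to `A_i`, and both triples are irreducible
(the only common invariant subspaces of `ℂ²` are `0` and `ℂ²`), then the two triples are
simultaneously conjugate by a single invertible matrix `P`. -/
theorem rank_two_hypergeometric_rigidity
    (A₁ A₂ A₃ B₁ B₂ B₃ : Matrix (Fin 2) (Fin 2) ℂ)
    (hA1 : IsUnit A₁) (hA2 : IsUnit A₂) (hA3 : IsUnit A₃)
    (hB1 : IsUnit B₁) (hB2 : IsUnit B₂) (hB3 : IsUnit B₃)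
    (hprodA : A₁ * A₂ * A₃ = 1) (hprodB : B₁ * B₂ * B₃ = 1)
    (hconj1 : ∃ Q : Matrix (Fin 2) (Fin 2) ℂ, IsUnit Q ∧ B₁ = Q * A₁ * Q⁻¹)
    (hconj2 : ∃ Q : Matrix (Fin 2) (Fin 2) ℂ, IsUnit Q ∧ B₂ = Q * A₂ * Q⁻¹)
    (hconj3 : ∃ Q : Matrix (Fin 2) (Fin 2) ℂ, IsUnit Q ∧ B₃ = Q * A₃ * Q⁻¹)
    (hirrA : ∀ W : Submodule ℂ (Fin 2 → ℂ),
      (∀ v ∈ W, A₁.mulVec v ∈ W) → (∀ v ∈ W, A₂.mulVec v ∈ W) →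
      (∀ v ∈ W, A₃.mulVec v ∈ W) → W = ⊥ ∨ W = ⊤)
    (hirrB : ∀ W : Submodule ℂ (Fin 2 → ℂ),
      (∀ v ∈ W, B₁.mulVec v ∈ W) → (∀ v ∈ W, B₂.mulVec v ∈ W) →
      (∀ v ∈ W, B₃.mulVec v ∈ W) → W = ⊥ ∨ W = ⊤) :
    ∃ P : Matrix (Fin 2) (Fin 2) ℂ, IsUnit P ∧
      B₁ = P * A₁ * P⁻¹ ∧ B₂ = P * A₂ * P⁻¹ ∧ B₃ = P * A₃ * P⁻¹ :=
  rank_two_hypergeometric_rigidity_general A₁ A₂ A₃ B₁ B₂ B₃ hprodA hprodB hconj1 hconj2 hconj3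
    hirrA hirrB
end

section
/- Let G be a group containing an abelian (commutative) subgroup H of finite index m. Then for all a, b ∈ G, the elements a^{m!} and b^{m!} commute: a^{m!} b^{m!} = b^{m!} a^{m!}. -/
/-- If `G` contains an abelian subgroup `H` of finite index `m`, then `a^{m!}` and `b^{m!}`
commute for all `a, b ∈ G`. -/
theorem pow_factorial_commute_of_abelian_finite_index {G : Type*} [Group G]
    (H : Subgroup G) (m : ℕ) (hm : 0 < m) (hidx : H.index = m)
    (hcomm : ∀ x ∈ H, ∀ y ∈ H, x * y = y * x) (a b : G) :
    a ^ (Nat.factorial m) * b ^ (Nat.factorial m)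
      = b ^ (Nat.factorial m) * a ^ (Nat.factorial m) := by
  have h0 : H.index ≠ 0 := by omega
  have key : ∀ g : G, g ^ (Nat.factorial m) ∈ H := fun g =>
    Subgroup.pow_mem_of_index_ne_zero_of_dvd h0 g
      (fun k hk hk' => Nat.dvd_factorial hk (hidx ▸ hk'))
  exact hcomm _ (key a) _ (key b)
end

section
/- Let g ≥ 2, r ≥ 2 and N ≥ 1. There exists a group homomorphism ρ : Γ_g → GL_r(ℂ) such that the trace of ρ(a_1)^N ρ(b_1)^N ρ(a_1)^{−N} ρ(b_1)^{−N} is not equal to r. -/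
open scoped commutatorElement

/-- The surface relation `[a₁,b₁][a₂,b₂]⋯[a_g,b_g]` in the free group on generators
`a_1,…,a_g` (indexed by `Sum.inl`) and `b_1,…,b_g` (indexed by `Sum.inr`). -/
def surfaceRel (g : ℕ) : FreeGroup (Fin g ⊕ Fin g) :=
  (List.ofFn fun i : Fin g =>
    ⁅FreeGroup.of (Sum.inl i : Fin g ⊕ Fin g), FreeGroup.of (Sum.inr i)⁆).prod

/-- The genus-`g` surface group `Γ_g`, presented by generators `a_1,…,a_g,b_1,…,b_g` and the
single relation `[a₁,b₁]⋯[a_g,b_g] = 1`. -/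
abbrev SurfaceGroup (g : ℕ) : Type :=
  PresentedGroup ({surfaceRel g} : Set (FreeGroup (Fin g ⊕ Fin g)))

/-!
For `g ≥ 2` any pair `(A, B)` in a group is the image of `(a₁, b₁)` under some homomorphism from
`Γ_g`: send `a₂, b₂` to `B, A` and the remaining generators to `1`, so that
`[A, B][B, A] = 1`. Take for `A`, `B` the elementary transvections `1 + E₀₁` and `1 + E₁₀`.
Their `N`-th powers are `1 + N E₀₁` and `1 + N E₁₀`, and the trace of the commutator of
`1 + x E₀₁` and `1 + y E₁₀` is `r + x² y²`, which differs from `r` when `N ≠ 0` in `ℂ`.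
-/

namespace Matrix

variable {n R : Type*} [Fintype n] [DecidableEq n] [CommRing R] {i j : n}

theorem trace_transvection_commutator (h : i ≠ j) (x y : R) :
    trace (transvection i j x * transvection j i y * transvection i j (-x) *
      transvection j i (-y)) = Fintype.card n + x ^ 2 * y ^ 2 := by
  simp only [transvection, Matrix.mul_add, mul_one, Matrix.add_mul, one_mul,
    single_mul_single_same, ne_eq, h.symm, not_false_eq_true, single_mul_single_of_ne, add_zero,
    mul_neg, h, neg_mul, neg_neg, trace_add, trace_one, trace_single_eq_of_ne,
    trace_single_eq_same, zero_add, neg_add_cancel_left]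
  ring

def transvectionHom (h : i ≠ j) : Multiplicative R →* GL n R :=
  MonoidHom.toHomUnits
    { toFun c := transvection i j c.toAdd
      map_one' := transvection_zero i j
      map_mul' _ _ := (transvection_mul_transvection_same i j h _ _).symm }

theorem coe_transvectionHom (h : i ≠ j) (c : Multiplicative R) :
    (transvectionHom h c : Matrix n n R) = transvection i j c.toAdd := rfl

theorem trace_commutator_transvectionHom (h : i ≠ j) (c d : Multiplicative R) :
    trace ((⁅transvectionHom h c, transvectionHom h.symm d⁆ : GL n R) : Matrix n n R) =
      Fintype.card n + c.toAdd ^ 2 * d.toAdd ^ 2 := by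
  simp [commutatorElement_def, ← map_inv, coe_transvectionHom, trace_transvection_commutator h]

end Matrix

namespace SurfaceGroup

theorem lift_surfaceRel {g : ℕ} {G : Type*} [Group G] (f : Fin g ⊕ Fin g → G) :
    FreeGroup.lift f (surfaceRel g) = (List.ofFn fun i => ⁅f (.inl i), f (.inr i)⁆).prod := by
  simp [surfaceRel, map_list_prod, List.map_ofFn, Function.comp_def, map_commutatorElement]

theorem exists_hom_of_first_handle {m : ℕ} {G : Type*} [Group G] (A B : G) :
    ∃ ρ : SurfaceGroup (m + 2) →* G,
      ρ (PresentedGroup.of (.inl 0)) = A ∧ ρ (PresentedGroup.of (.inr 0)) = B := by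
  let f : Fin (m + 2) ⊕ Fin (m + 2) → G :=
    Sum.elim (Fin.cons A (Fin.cons B 1)) (Fin.cons B (Fin.cons A 1))
  have hf : ∀ r ∈ ({surfaceRel (m + 2)} : Set _), FreeGroup.lift f r = 1 := by
    rintro r rfl
    simpa [lift_surfaceRel, List.ofFn_succ, f] using mul_inv_cancel ⁅A, B⁆
  exact ⟨PresentedGroup.toGroup hf, by simp [f], by simp [f]⟩

end SurfaceGroup

/-- For `g ≥ 2`, `r ≥ 2` and `N ≥ 1`, there is a representation `ρ : Γ_g → GL_r(ℂ)` with
`tr(ρ(a₁)^N ρ(b₁)^N ρ(a₁)^{−N} ρ(b₁)^{−N}) ≠ r`; i.e. the regular function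
`tr([ρ(a₁)^N, ρ(b₁)^N]) − r` is not identically zero on the representation variety. -/
theorem exists_rep_trace_commutator_pow_ne (g r N : ℕ) (hg : 2 ≤ g) (hr : 2 ≤ r)
    (hN : 1 ≤ N) :
    ∃ ρ : SurfaceGroup g →* GL (Fin r) ℂ,
      ∀ a b : SurfaceGroup g,
        a = PresentedGroup.of (Sum.inl (⟨0, by omega⟩ : Fin g)) →
        b = PresentedGroup.of (Sum.inr (⟨0, by omega⟩ : Fin g)) →
        Matrix.trace
          ((ρ a ^ N * ρ b ^ N * (ρ a ^ N)⁻¹ * (ρ b ^ N)⁻¹ : GL (Fin r) ℂ) :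
            Matrix (Fin r) (Fin r) ℂ) ≠ (r : ℂ) := by
  obtain ⟨m, rfl⟩ := Nat.exists_eq_add_of_le' hg
  have h01 : (⟨0, by omega⟩ : Fin r) ≠ ⟨1, by omega⟩ := by simp
  obtain ⟨ρ, hρa, hρb⟩ := SurfaceGroup.exists_hom_of_first_handle (m := m)
    (Matrix.transvectionHom (R := ℂ) h01 (.ofAdd 1)) (Matrix.transvectionHom h01.symm (.ofAdd 1))
  refine ⟨ρ, ?_⟩
  rintro a b rfl rfl
  rw [Fin.zero_eta, hρa, hρb, ← commutatorElement_def,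
    ← map_pow (Matrix.transvectionHom (R := ℂ) h01),
    ← map_pow (Matrix.transvectionHom (R := ℂ) h01.symm),
    Matrix.trace_commutator_transvectionHom, Fintype.card_fin]
  simpa using Nat.one_le_iff_ne_zero.mp hN
end

section
/- Let K be a number field with ring of integers 𝓞_K, and let r ≥ 1. Let G be a subgroup of GL_r(𝓞_K). Suppose that for every ring embedding σ : K → ℂ there exists P_σ ∈ GL_r(ℂ) such that for every g ∈ G the matrix P_σ · σ(g) · P_σ^{−1} is unitary, where σ(g) denotes the complex matrix obtained by applying σ to each entry of g. Then G is a finite group. -/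
open NumberField

set_option maxHeartbeats 1000000 in
/-- A subgroup of `GL_r(𝓞_K)` (for `K` a number field) which is conjugate to a group of
unitary matrices under every complex embedding of `K` is finite. -/
theorem finite_of_unitary_all_embeddings (K : Type*) [Field K] [NumberField K]
    (r : ℕ) (hr : 1 ≤ r) (G : Subgroup (GL (Fin r) (𝓞 K)))
    (h : ∀ σ : K →+* ℂ, ∃ P : Matrix (Fin r) (Fin r) ℂ, IsUnit P ∧
      ∀ g ∈ G,
        P * ((g : Matrix (Fin r) (Fin r) (𝓞 K)).map
              (fun x => σ (algebraMap (𝓞 K) K x))) * P⁻¹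
          ∈ Matrix.unitaryGroup (Fin r) ℂ) :
    (G : Set (GL (Fin r) (𝓞 K))).Finite := by
  -- Step 1: for each embedding, a uniform bound on the entries.
  have key : ∀ σ : K →+* ℂ, ∃ B : ℝ, 0 ≤ B ∧ ∀ g ∈ G, ∀ i j : Fin r,
      ‖σ (algebraMap (𝓞 K) K ((g : Matrix (Fin r) (Fin r) (𝓞 K)) i j))‖ ≤ B := by
    intro σ
    obtain ⟨Q, hQu, hQ⟩ := h σ
    have hdet : IsUnit Q.det := (Matrix.isUnit_iff_isUnit_det Q).mp hQu
    have hQinv : Q⁻¹ * Q = 1 := Matrix.nonsing_inv_mul Q hdet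
    have hQinv' : Q * Q⁻¹ = 1 := Matrix.mul_nonsing_inv Q hdet
    set R : Matrix (Fin r) (Fin r) ℂ := Q⁻¹ with hR
    clear_value R
    refine ⟨(∑ i, ∑ k, ‖R i k‖) * (∑ l, ∑ j, ‖Q l j‖), ?_, ?_⟩
    · exact mul_nonneg
        (Finset.sum_nonneg fun i _ => Finset.sum_nonneg fun k _ => norm_nonneg _)
        (Finset.sum_nonneg fun l _ => Finset.sum_nonneg fun j _ => norm_nonneg _)
    intro g hg i j
    set M : Matrix (Fin r) (Fin r) ℂ :=
      (g : Matrix (Fin r) (Fin r) (𝓞 K)).map (fun x => σ (algebraMap (𝓞 K) K x)) with hM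
    have hU : Q * M * R ∈ Matrix.unitaryGroup (Fin r) ℂ := hQ g hg
    set U : Matrix (Fin r) (Fin r) ℂ := Q * M * R with hUdef
    clear_value U
    have hMeq : M = R * U * Q := by
      rw [hUdef, Matrix.mul_assoc Q M R, ← Matrix.mul_assoc R Q (M * R), hQinv, Matrix.one_mul,
        Matrix.mul_assoc M R Q, hQinv, Matrix.mul_one]
    have hentry : σ (algebraMap (𝓞 K) K ((g : Matrix (Fin r) (Fin r) (𝓞 K)) i j)) = M i j := by
      simp [hM, Matrix.map_apply]
    rw [hentry, hMeq]
    have expand : (R * U * Q) i j = ∑ l, (∑ k, R i k * U k l) * Q l j := by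
      rw [Matrix.mul_apply]
      exact Finset.sum_congr rfl fun l _ => by rw [Matrix.mul_apply]
    rw [expand]
    have step1 : ∀ l, ‖(∑ k, R i k * U k l) * Q l j‖ ≤ (∑ k, ‖R i k‖) * ‖Q l j‖ := by
      intro l
      rw [norm_mul]
      refine mul_le_mul_of_nonneg_right ?_ (norm_nonneg _)
      refine le_trans (norm_sum_le _ _) (Finset.sum_le_sum fun k _ => ?_)
      rw [norm_mul]
      calc ‖R i k‖ * ‖U k l‖ ≤ ‖R i k‖ * 1 :=
            mul_le_mul_of_nonneg_left (entry_norm_bound_of_unitary hU k l) (norm_nonneg _)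
        _ = ‖R i k‖ := mul_one _
    refine le_trans (norm_sum_le _ _) (le_trans (Finset.sum_le_sum fun l _ => step1 l) ?_)
    have hfact : ∑ l, (∑ k, ‖R i k‖) * ‖Q l j‖ = (∑ k, ‖R i k‖) * (∑ l, ‖Q l j‖) := by
      rw [Finset.mul_sum]
    rw [hfact]
    have h1 : (∑ k, ‖R i k‖) ≤ ∑ i', ∑ k, ‖R i' k‖ :=
      Finset.single_le_sum (f := fun i' => ∑ k, ‖R i' k‖)
        (fun i' _ => Finset.sum_nonneg fun k _ => norm_nonneg _) (Finset.mem_univ i)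
    have h2 : (∑ l, ‖Q l j‖) ≤ ∑ l, ∑ j', ‖Q l j'‖ :=
      Finset.sum_le_sum fun l _ =>
        Finset.single_le_sum (f := fun j' => ‖Q l j'‖) (fun j' _ => norm_nonneg _)
          (Finset.mem_univ j)
    exact mul_le_mul h1 h2 (Finset.sum_nonneg fun l _ => norm_nonneg _)
      (Finset.sum_nonneg fun i' _ => Finset.sum_nonneg fun k _ => norm_nonneg _)
  choose B hB0 hB using key
  -- Step 2: a global bound over all embeddings.
  set C : ℝ := ∑ σ : K →+* ℂ, B σ with hC
  have hBC : ∀ σ : K →+* ℂ, B σ ≤ C :=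
    fun σ => Finset.single_le_sum (fun τ _ => hB0 τ) (Finset.mem_univ σ)
  -- Step 3: finite set of integral elements with bounded embeddings.
  have hT : {x : K | IsIntegral ℤ x ∧ ∀ φ : K →+* ℂ, ‖φ x‖ ≤ C}.Finite :=
    NumberField.Embeddings.finite_of_norm_le K ℂ C
  set T : Set K := {x : K | IsIntegral ℤ x ∧ ∀ φ : K →+* ℂ, ‖φ x‖ ≤ C} with hTdef
  -- Step 4: inject `G` into matrices with entries in `T`.
  set f : GL (Fin r) (𝓞 K) → Matrix (Fin r) (Fin r) K :=
    fun g => (g : Matrix (Fin r) (Fin r) (𝓞 K)).map (algebraMap (𝓞 K) K) with hf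
  have hfin : Set.Finite (Set.pi Set.univ
      (fun _ : Fin r => Set.pi Set.univ (fun _ : Fin r => T)) :
        Set (Fin r → Fin r → K)) :=
    Set.Finite.pi fun _ => Set.Finite.pi fun _ => hT
  have himg : f '' (G : Set (GL (Fin r) (𝓞 K))) ⊆
      (Set.pi Set.univ (fun _ : Fin r => Set.pi Set.univ (fun _ : Fin r => T)) :
        Set (Fin r → Fin r → K)) := by
    rintro _ ⟨g, hg, rfl⟩
    intro i _ j _
    refine ⟨NumberField.RingOfIntegers.isIntegral_coe _, fun φ => ?_⟩
    exact le_trans (hB φ g hg i j) (hBC φ)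
  have hinj : Set.InjOn f (G : Set (GL (Fin r) (𝓞 K))) := by
    intro a _ b _ hab
    have : (a : Matrix (Fin r) (Fin r) (𝓞 K)) = (b : Matrix (Fin r) (Fin r) (𝓞 K)) := by
      ext i j
      have := congrFun (congrFun hab i) j
      simp only [hf, Matrix.map_apply] at this
      exact this
    exact Units.ext this
  exact Set.Finite.of_finite_image (hfin.subset himg) hinj
end
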